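/- (Extended q-Chu–Vandermonde with shift m) For 0<q<1, nonnegative integers n and m, and complex x, y ≠ 0 with (y;q)_n ≠ 0 and (x q^{1-n}/y; q)_m ≠ 0: ∑_{k=0}^n ((q^{-n};q)_k (x;q)_k/((q;q)_k (y;q)_k)) q^{(1+m)k} = (x^n (y/x;q)_n/(y;q)_n) · ∑_{j=0}^m [m choose j]_q · ((q^{1-n}/y;q)_{m-j} (q x / y;q)_{m-j} / (x q^{1-n}/y;q)_{m-j}) · (q/y)^j. -/

import Mathlib

open Finset

noncomputable def qPoch (q a : ℂ) (n : ℕ) : ℂ := ∏ k ∈ Finset.range n, (1 - a * q ^ k)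

noncomputable def qPochInf (q a : ℂ) : ℂ := ∏' k : ℕ, (1 - a * q ^ k)

noncomputable def cauchyP (q x y : ℂ) (n : ℕ) : ℂ := ∏ k ∈ Finset.range n, (x - q ^ k * y)

noncomputable def qBinom (q : ℂ) (n k : ℕ) : ℂ := qPoch q q n / (qPoch q q k * qPoch q q (n - k))

noncomputable def Dq (q : ℂ) (f : ℂ → ℂ) : ℂ → ℂ := fun a => (f a - f (q * a)) / a

noncomputable def thetaq (q : ℂ) (f : ℂ → ℂ) : ℂ → ℂ := fun a => (f (a / q) - f a) / (a / q)

noncomputable def qIntegral (q : ℂ) (f : ℂ → ℂ) (c d : ℂ) : ℂ :=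
  (1 - q) * ∑' n : ℕ, q ^ n * (d * f (d * q ^ n) - c * f (c * q ^ n))

lemma qPoch_zero (q a : ℂ) : qPoch q a 0 = 1 := by simp [qPoch]

lemma qPoch_succ (q a : ℂ) (n : ℕ) : qPoch q a (n+1) = qPoch q a n * (1 - a * q ^ n) := by
  simp [qPoch, Finset.prod_range_succ]

lemma qPoch_succ' (q a : ℂ) (n : ℕ) : qPoch q a (n+1) = (1 - a) * qPoch q (a*q) n := by
  rw [qPoch, Finset.prod_range_succ', qPoch, pow_zero, mul_one, mul_comm]
  congr 1
  apply Finset.prod_congr rfl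
  intro i _
  ring

lemma qPoch_swap (q a : ℂ) (n : ℕ) : (1 - a) * qPoch q (a*q) n = qPoch q a n * (1 - a * q ^ n) := by
  rw [← qPoch_succ', qPoch_succ]

lemma qPoch_add (q a : ℂ) (i j : ℕ) : qPoch q a (i+j) = qPoch q a i * qPoch q (a * q^i) j := by
  rw [qPoch, Finset.prod_range_add, ← qPoch]
  congr 1
  apply Finset.prod_congr rfl
  intro k _
  ring

lemma cauchy_succ' (q x y : ℂ) (n : ℕ) :
    cauchyP q x y (n+1) = (x - y) * cauchyP q x (q*y) n := by
  rw [cauchyP, Finset.prod_range_succ', cauchyP, pow_zero, one_mul, mul_comm]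
  congr 1
  apply Finset.prod_congr rfl
  intro i _
  ring

lemma cauchy_succ (q x y : ℂ) (n : ℕ) :
    cauchyP q x y (n+1) = cauchyP q x y n * (x - q^n * y) := by
  rw [cauchyP, Finset.prod_range_succ, cauchyP]

-- nonvanishing facts for real 0 < q < 1
lemma one_sub_pow_ne (q : ℝ) (hq0 : 0 < q) (hq1 : q < 1) (j : ℕ) :
    (1 : ℂ) - (q:ℂ) * (q:ℂ)^j ≠ 0 := by
  have h : (q:ℂ) * (q:ℂ)^j = ((q^(j+1) : ℝ) : ℂ) := by push_cast; ring
  rw [h, sub_ne_zero]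
  intro hc
  have : (1:ℝ) = q^(j+1) := by exact_mod_cast hc
  have h2 : q^(j+1) < 1 := pow_lt_one₀ hq0.le hq1 (Nat.succ_ne_zero j)
  linarith

lemma qq_ne (q : ℝ) (hq0 : 0 < q) (hq1 : q < 1) (k : ℕ) : qPoch (q:ℂ) (q:ℂ) k ≠ 0 := by
  rw [qPoch]
  apply Finset.prod_ne_zero_iff.mpr
  intro i _
  exact one_sub_pow_ne q hq0 hq1 i
lemma baseSum (q : ℝ) (hq0 : 0 < q) (hq1 : q < 1) :
    ∀ (n : ℕ) (x y : ℂ),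
      ∑ k ∈ Finset.range (n+1),
        qPoch (q:ℂ) ((q:ℂ)^(-(n:ℤ))) k * qPoch (q:ℂ) x k / qPoch (q:ℂ) (q:ℂ) k * (q:ℂ)^k *
          qPoch (q:ℂ) (y*(q:ℂ)^k) (n-k)
        = cauchyP (q:ℂ) x y n := by
  intro n
  induction n with
  | zero => intro x y; simp [qPoch, cauchyP]
  | succ n ih =>
    intro x y
    have hQ0 : (q:ℂ) ≠ 0 := Complex.ofReal_ne_zero.mpr (ne_of_gt hq0)
    set Q : ℂ := (q:ℂ) with hQdef
    set z : ℂ := Q^(-(n:ℤ)) with hzdef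
    set g : ℕ → ℂ := fun k => qPoch Q z k * qPoch Q x k / qPoch Q Q k * Q^k *
      qPoch Q ((Q*y)*Q^k) (n-k) with hg
    have hgsum : ∑ k ∈ Finset.range (n+1), g k = cauchyP Q x (Q*y) n := ih x (Q*y)
    have hzt : qPoch Q z (n+1) = 0 := by
      rw [qPoch_succ, hzdef]
      have h1 : Q^(-(n:ℤ)) * Q^n = 1 := by
        rw [← zpow_natCast Q n, ← zpow_add₀ hQ0]; simp
      rw [h1]; simp
    have hgtop : g (n+1) = 0 := by
      simp only [hg, hzt]
      simp
    have hzz : (Q:ℂ)^(-((n:ℕ)+1:ℕ):ℤ) = z / Q := by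
      rw [hzdef]
      rw [div_eq_mul_inv, ← zpow_neg_one, ← zpow_add₀ hQ0]
      congr 1
      push_cast
      ring
    have key : ∀ j ∈ Finset.range (n+1),
        qPoch Q (Q^(-((n:ℕ)+1:ℕ):ℤ)) (j+1) * qPoch Q x (j+1) / qPoch Q Q (j+1) * Q^(j+1) *
          qPoch Q (y*Q^(j+1)) ((n+1)-(j+1))
        = ((Q^(j+1))⁻¹ - y) * g (j+1) + (x - (Q^j)⁻¹) * g j := by
      intro j hj
      have hj' : j ≤ n := Nat.lt_succ_iff.mp (Finset.mem_range.mp hj)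
      have hE : (Q:ℂ)^j ≠ 0 := pow_ne_zero _ hQ0
      have hP3 : qPoch Q Q j ≠ 0 := qq_ne q hq0 hq1 j
      have hfac : (1:ℂ) - Q*Q^j ≠ 0 := one_sub_pow_ne q hq0 hq1 j
      rw [hzz]
      by_cases hjn : j = n
      · subst hjn
        -- edge case k = j+1 = n+1
        have e0 : (j+1) - (j+1) = 0 := by omega
        rw [e0, qPoch_zero]
        rw [hgtop]
        simp only [hg]
        have e1 : j - j = 0 := by omega
        rw [e1, qPoch_zero]
        rw [qPoch_succ' Q (z/Q) j, qPoch_succ Q x j, qPoch_succ Q Q j]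
        have e2 : z / Q * Q = z := div_mul_cancel₀ z hQ0
        rw [e2]
        have hz1 : z = (Q^j)⁻¹ := by
          rw [hzdef, zpow_neg, zpow_natCast]
        rw [hz1]
        have hfac' : (1:ℂ) - Q^j*Q ≠ 0 := by rw [mul_comm]; exact hfac
        field_simp
        ring
      · have hjlt : j < n := lt_of_le_of_ne hj' hjn
        obtain ⟨r, hr⟩ : ∃ r, n = j + 1 + r := ⟨n - j - 1, by omega⟩
        have e1 : (n+1) - (j+1) = r + 1 := by omega
        have e2 : n - (j+1) = r := by omega
        have e3 : n - j = r + 1 := by omega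
        simp only [hg, e2, e3]
        rw [e1]
        rw [qPoch_succ' Q (z/Q) j, qPoch_succ Q x j, qPoch_succ Q Q j,
            qPoch_succ' Q (y*Q^(j+1)) r, qPoch_succ Q z j]
        rw [qPoch_succ' Q (Q*y*Q^j) r]
        have a1 : z / Q * Q = z := div_mul_cancel₀ z hQ0
        have a2 : y * Q^(j+1) * Q = y * Q^(j+1) * Q := rfl
        have a3 : Q * y * Q^j * Q = y * Q^(j+1) * Q := by ring
        have a4 : Q * y * Q^(j+1) = y * Q^(j+1) * Q := by ring
        rw [a1, a3, a4]
        have a5 : (1 - Q*y*Q^j) = (1 - y*Q^(j+1)) := by ring_nf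
        rw [a5]
        set W : ℂ := qPoch Q (y * Q^(j+1) * Q) r with hW
        field_simp
        ring
    -- assembly
    have hT0 : qPoch Q (Q^(-((n:ℕ)+1:ℕ):ℤ)) 0 * qPoch Q x 0 / qPoch Q Q 0 * Q^0 *
        qPoch Q (y*Q^0) ((n+1)-0) = (1-y) * g 0 := by
      simp only [qPoch_zero, pow_zero, mul_one, one_mul, Nat.sub_zero, div_one]
      simp only [hg, qPoch_zero, pow_zero, mul_one, one_mul, Nat.sub_zero, div_one]
      rw [qPoch_succ', mul_comm Q y]
    have hstep : ∑ k ∈ Finset.range (n+1+1),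
        qPoch Q (Q^(-((n:ℕ)+1:ℕ):ℤ)) k * qPoch Q x k / qPoch Q Q k * Q^k *
          qPoch Q (y*Q^k) ((n+1)-k)
        = ∑ i ∈ Finset.range (n+1),
            (((Q^(i+1))⁻¹ - y) * g (i+1) + (x - (Q^i)⁻¹) * g i) + (1-y) * g 0 := by
      rw [Finset.sum_range_succ']
      rw [hT0]
      congr 1
      exact Finset.sum_congr rfl key
    rw [hstep]
    rw [Finset.sum_add_distrib]
    have hA : ∑ i ∈ Finset.range (n+1), ((Q^(i+1))⁻¹ - y) * g (i+1)
        = ∑ i ∈ Finset.range (n+1), ((Q^i)⁻¹ - y) * g i - (1-y) * g 0 := by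
      have h2 := Finset.sum_range_succ' (fun i => ((Q^i)⁻¹ - y) * g i) (n+1)
      rw [Finset.sum_range_succ] at h2
      have h0 : ((Q^(n+1))⁻¹ - y) * g (n+1) = 0 := by rw [hgtop]; ring
      simp only [h0, add_zero, pow_zero, inv_one] at h2
      linear_combination -h2
    rw [hA]
    have hcomb : ∑ i ∈ Finset.range (n+1), ((Q^i)⁻¹ - y) * g i
        + ∑ i ∈ Finset.range (n+1), (x - (Q^i)⁻¹) * g i
        = (x - y) * cauchyP Q x (Q*y) n := by
      rw [← Finset.sum_add_distrib, ← hgsum, Finset.mul_sum]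
      apply Finset.sum_congr rfl
      intro i hi
      have hE : (Q:ℂ)^i ≠ 0 := pow_ne_zero _ hQ0
      field_simp
      ring
    have : cauchyP Q x y (n+1) = (x - y) * cauchyP Q x (Q*y) n := cauchy_succ' Q x y n
    rw [this]
    rw [← hcomb]
    ring

noncomputable def LfS (q : ℂ) (n m : ℕ) (x y : ℂ) : ℂ :=
  ∑ k ∈ Finset.range (n+1),
    qPoch q (q^(-(n:ℤ))) k * qPoch q x k / qPoch q q k * q^((1+m)*k) * qPoch q (y*q^k) (n-k)

noncomputable def RfS (q : ℂ) (m : ℕ) (a b c y : ℂ) : ℂ :=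
  ∑ j ∈ Finset.range (m+1),
    qBinom q m j * (qPoch q a (m-j) * qPoch q b (m-j) * qPoch q (c*q^(m-j)) j) * q^j * y^(m-j)

lemma qPoch_factors (q a : ℂ) {k n : ℕ} (hk : k ≤ n) (h : qPoch q a n ≠ 0) :
    qPoch q a k ≠ 0 ∧ qPoch q (a*q^k) (n-k) ≠ 0 := by
  have h2 := qPoch_add q a k (n-k)
  rw [Nat.add_sub_cancel' hk] at h2
  rw [h2] at h
  exact mul_ne_zero_iff.mp h

lemma recurL (q : ℝ) (hq0 : 0 < q) (hq1 : q < 1) (n m : ℕ) (x y : ℂ) (hy0 : y ≠ 0) :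
    LfS (q:ℂ) n (m+1) x y
      = ((q:ℂ)/y) * (LfS (q:ℂ) n m x y - (1 - y*(q:ℂ)^((n:ℤ)-1)) * LfS (q:ℂ) n m x (y/(q:ℂ))) := by
  have hQ0 : (q:ℂ) ≠ 0 := Complex.ofReal_ne_zero.mpr (ne_of_gt hq0)
  set Q : ℂ := (q:ℂ) with hQdef
  rw [LfS, LfS, LfS, Finset.mul_sum, ← Finset.sum_sub_distrib, Finset.mul_sum]
  apply Finset.sum_congr rfl
  intro k hk
  have hk' : k ≤ n := Nat.lt_succ_iff.mp (Finset.mem_range.mp hk)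
  have key : (1 - y*Q^((n:ℤ)-1)) * qPoch Q ((y/Q)*Q^k) (n-k)
      = (1 - y*Q^k/Q) * qPoch Q (y*Q^k) (n-k) := by
    have hs := qPoch_swap Q (y*Q^k/Q) (n-k)
    have e1 : y*Q^k/Q*Q = y*Q^k := div_mul_cancel₀ _ hQ0
    have e2 : y*Q^k/Q*Q^(n-k) = y*Q^((n:ℤ)-1) := by
      rw [div_mul_eq_mul_div, mul_assoc, ← pow_add, Nat.add_sub_cancel' hk']
      rw [zpow_sub₀ hQ0, zpow_natCast, zpow_one]
      ring
    rw [e1, e2] at hs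
    have e3 : (y/Q)*Q^k = y*Q^k/Q := by ring
    rw [e3, hs]
    ring
  have hpk : qPoch Q Q k ≠ 0 := qq_ne q hq0 hq1 k
  have ee : (1+(m+1))*k = (1+m)*k + k := by ring
  have key' : Q*((1 - y*Q^((n:ℤ)-1)) * qPoch Q (y*Q^k/Q) (n-k))
      = (Q - y*Q^k) * qPoch Q (y*Q^k) (n-k) := by
    rw [show y*Q^k/Q = y/Q*Q^k by ring, key]
    field_simp
  rw [ee, pow_add]
  field_simp
  rw [mul_comm (Q^k) y]
  linear_combination (qPoch Q (Q^(-(n:ℤ))) k * qPoch Q x k) * key'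

lemma qBinom_zero (q : ℝ) (hq0 : 0 < q) (hq1 : q < 1) (M : ℕ) : qBinom (q:ℂ) M 0 = 1 := by
  rw [qBinom, qPoch_zero, one_mul, Nat.sub_zero, div_self (qq_ne q hq0 hq1 M)]

lemma qBinom_self (q : ℝ) (hq0 : 0 < q) (hq1 : q < 1) (M : ℕ) : qBinom (q:ℂ) M M = 1 := by
  rw [qBinom, Nat.sub_self, qPoch_zero, mul_one, div_self (qq_ne q hq0 hq1 M)]

lemma pascal (q : ℝ) (hq0 : 0 < q) (hq1 : q < 1) (m j : ℕ) (hj : j < m) :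
    qBinom (q:ℂ) (m+1) (j+1) = (q:ℂ)^(j+1) * qBinom (q:ℂ) m (j+1) + qBinom (q:ℂ) m j := by
  set Q : ℂ := (q:ℂ) with hQdef
  obtain ⟨r, rfl⟩ : ∃ r, m = j + 1 + r := ⟨m - j - 1, by omega⟩
  rw [qBinom, qBinom, qBinom]
  rw [show (j+1+r+1) - (j+1) = r+1 by omega, show (j+1+r) - (j+1) = r by omega,
      show (j+1+r) - j = r+1 by omega]
  rw [qPoch_succ Q Q (j+1+r), qPoch_succ Q Q j, qPoch_succ Q Q r]
  have h1 : qPoch Q Q j ≠ 0 := qq_ne q hq0 hq1 j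
  have h2 : qPoch Q Q r ≠ 0 := qq_ne q hq0 hq1 r
  have h3 : (1:ℂ) - Q*Q^j ≠ 0 := one_sub_pow_ne q hq0 hq1 j
  have h4 : (1:ℂ) - Q*Q^r ≠ 0 := one_sub_pow_ne q hq0 hq1 r
  field_simp
  ring

lemma recurR (q : ℝ) (hq0 : 0 < q) (hq1 : q < 1) (m : ℕ) (a b c y : ℂ) :
    RfS (q:ℂ) (m+1) a b c y
      = (q:ℂ)*(1-c*(q:ℂ)^m)*RfS (q:ℂ) m a b c y
        + y*(q:ℂ)^m*(1-a)*(1-b)*RfS (q:ℂ) m (a*(q:ℂ)) (b*(q:ℂ)) (c*(q:ℂ)) (y/(q:ℂ)) := by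
  have hQ0 : (q:ℂ) ≠ 0 := Complex.ofReal_ne_zero.mpr (ne_of_gt hq0)
  set Q : ℂ := (q:ℂ) with hQdef
  set w : ℕ → ℂ := fun j => qBinom Q (m+1) j *
    (qPoch Q a (m+1-j) * qPoch Q b (m+1-j) * qPoch Q (c*Q^(m+1-j)) j) * Q^j * y^(m+1-j) with hw
  set F : ℕ → ℂ := fun j => Q*(1-c*Q^m) * (qBinom Q m j *
    (qPoch Q a (m-j) * qPoch Q b (m-j) * qPoch Q (c*Q^(m-j)) j) * Q^j * y^(m-j)) with hF
  set G : ℕ → ℂ := fun j => y*Q^m*(1-a)*(1-b) * (qBinom Q m j *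
    (qPoch Q (a*Q) (m-j) * qPoch Q (b*Q) (m-j) * qPoch Q ((c*Q)*Q^(m-j)) j) * Q^j * (y/Q)^(m-j)) with hG
  have hL : RfS Q (m+1) a b c y = ∑ j ∈ Finset.range (m+2), w j := rfl
  have hR1 : Q*(1-c*Q^m)*RfS Q m a b c y = ∑ j ∈ Finset.range (m+1), F j := by
    rw [RfS, Finset.mul_sum]
  have hR2 : y*Q^m*(1-a)*(1-b)*RfS Q m (a*Q) (b*Q) (c*Q) (y/Q) = ∑ j ∈ Finset.range (m+1), G j := by
    rw [RfS, Finset.mul_sum]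
  rw [hL, hR1, hR2]
  rw [Finset.sum_range_succ (f := w), Finset.sum_range_succ' (f := w),
      Finset.sum_range_succ (f := F), Finset.sum_range_succ' (f := G)]
  have c1 : w 0 = G 0 := by
    simp only [hw, hG]
    rw [qBinom_zero q hq0 hq1, qBinom_zero q hq0 hq1]
    simp only [Nat.sub_zero, pow_zero, qPoch_zero]
    rw [qPoch_succ' Q a m, qPoch_succ' Q b m]
    rw [div_pow]
    field_simp
    ring
  have c2 : w (m+1) = F m := by
    simp only [hw, hF]
    rw [qBinom_self q hq0 hq1, qBinom_self q hq0 hq1]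
    simp only [Nat.sub_self, pow_zero, qPoch_zero, mul_one]
    rw [qPoch_succ Q c m]
    ring_nf
  have c3 : ∀ j ∈ Finset.range m, w (j+1) = F j + G (j+1) := by
    intro j hj
    have hjm : j < m := Finset.mem_range.mp hj
    obtain ⟨r, hr⟩ : ∃ r, m = j + 1 + r := ⟨m - j - 1, by omega⟩
    simp only [hw, hF, hG]
    rw [show (m+1)-(j+1) = r+1 by omega, show m-(j+1) = r by omega, show m-j = r+1 by omega]
    rw [pascal q hq0 hq1 m j hjm]
    rw [show (c*Q)*Q^r = c*Q^(r+1) by ring]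
    rw [qPoch_succ Q (c*Q^(r+1)) j]
    rw [qPoch_succ' Q a r, qPoch_succ' Q b r]
    rw [show c*Q^(r+1)*Q^j = c*Q^m by rw [hr]; ring]
    rw [show Q^m = Q^(j+1+r) by rw [hr]]
    rw [div_pow]
    field_simp
    ring
  rw [Finset.sum_congr rfl c3, Finset.sum_add_distrib, c1, c2]
  ring

lemma cauchy_swap (q x w : ℂ) (n : ℕ) :
    (x - w) * cauchyP q x (q*w) n = cauchyP q x w n * (x - q^n * w) := by
  rw [← cauchy_succ', cauchy_succ]

lemma mainID (q : ℝ) (hq0 : 0 < q) (hq1 : q < 1) (n : ℕ) (x : ℂ) :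
    ∀ (m : ℕ) (y : ℂ), y ≠ 0 →
      LfS (q:ℂ) n m x y * qPoch (q:ℂ) (x*(q:ℂ)^(1-(n:ℤ))/y) m * y^m
        = cauchyP (q:ℂ) x y n *
            RfS (q:ℂ) m ((q:ℂ)^(1-(n:ℤ))/y) ((q:ℂ)*x/y) (x*(q:ℂ)^(1-(n:ℤ))/y) y := by
  have hQ0 : (q:ℂ) ≠ 0 := Complex.ofReal_ne_zero.mpr (ne_of_gt hq0)
  set Q : ℂ := (q:ℂ) with hQdef
  set v : ℂ := Q^(1-(n:ℤ)) with hv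
  set u : ℂ := Q^((n:ℤ)-1) with hu
  have hu0 : u ≠ 0 := by rw [hu]; exact zpow_ne_zero _ hQ0
  have huv : u * v = 1 := by rw [hu, hv, ← zpow_add₀ hQ0]; norm_num
  have hv2 : v = u⁻¹ := by
    rw [hu, hv, ← zpow_neg]
    congr 1
    ring
  intro m
  induction m with
  | zero =>
    intro y hy0
    simp only [pow_zero, mul_one, qPoch_zero]
    have hrf : RfS Q 0 (v/y) (Q*x/y) (x*v/y) y = 1 := by
      simp [RfS, qBinom, qPoch]
    rw [hrf, mul_one]
    have hb := baseSum q hq0 hq1 n x y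
    rw [LfS]
    simpa using hb
  | succ m ih =>
    intro y hy0
    have hyQ : y/Q ≠ 0 := div_ne_zero hy0 hQ0
    have hL := recurL q hq0 hq1 n m x y hy0
    have hR := recurR q hq0 hq1 m (v/y) (Q*x/y) (x*v/y) y
    rw [← hQdef] at hL hR
    rw [← hu] at hL
    have ihy := ih y hy0
    have ihq := ih (y/Q) hyQ
    have ea : v/(y/Q) = v/y*Q := by field_simp
    have eb : Q*x/(y/Q) = Q*x/y*Q := by field_simp
    have ec : x*v/(y/Q) = x*v/y*Q := by field_simp
    rw [ea, eb, ec] at ihq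
    have hsw := cauchy_swap Q x (y/Q) n
    rw [show Q*(y/Q) = y from mul_div_cancel₀ y hQ0] at hsw
    rw [show Q^n*(y/Q) = y*u from by rw [hu, zpow_sub₀ hQ0, zpow_natCast, zpow_one]; ring] at hsw
    have hsw2 : (x*Q - y)*cauchyP Q x y n = cauchyP Q x (y/Q) n * (x - y*u) * Q := by
      have h := congrArg (fun t => t*Q) hsw
      rw [← h]
      field_simp
    rw [hL, hR]
    have hP1 : qPoch Q (x*v/y) (m+1) = qPoch Q (x*v/y) m * (1-(x*v/y)*Q^m) := qPoch_succ Q _ m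
    have hP2 : qPoch Q (x*v/y) (m+1) = (1-(x*v/y))*qPoch Q (x*v/y*Q) m := qPoch_succ' Q _ m
    have e2 : (Q/y)*(LfS Q n m x y)*(qPoch Q (x*v/y) m*(1-(x*v/y)*Q^m))*y^(m+1)
        = Q*(1-(x*v/y)*Q^m)*(cauchyP Q x y n * RfS Q m (v/y) (Q*x/y) (x*v/y) y) := by
      rw [← ihy]
      field_simp
      ring
    have e3 : (Q/y)*((1-y*u)*LfS Q n m x (y/Q))*((1-(x*v/y))*qPoch Q (x*v/y*Q) m)*y^(m+1)
        = Q^(m+1)*(1-y*u)*(1-x*v/y)*(cauchyP Q x (y/Q) n *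
            RfS Q m (v/y*Q) (Q*x/y*Q) (x*v/y*Q) (y/Q)) := by
      rw [← ihq]
      field_simp
      rw [div_pow]
      field_simp
      ring
    have h5 : Q*(1-y*u)*(1-x*v/y)*cauchyP Q x (y/Q) n
        = -(y*(1-v/y)*(1-Q*x/y))*cauchyP Q x y n := by
      have h5' : Q*(1-y*u)*(y*u-x)*cauchyP Q x (y/Q) n
          = (1-y*u)*(y-Q*x)*cauchyP Q x y n := by
        linear_combination (1-y*u) * hsw2
      rw [hv2]
      apply mul_left_cancel₀ (mul_ne_zero hy0 hu0)
      calc y*u*(Q*(1-y*u)*(1-x*u⁻¹/y)*cauchyP Q x (y/Q) n)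
          = Q*(1-y*u)*(y*u-x)*cauchyP Q x (y/Q) n := by
            field_simp
        _ = (1-y*u)*(y-Q*x)*cauchyP Q x y n := h5'
        _ = y*u*(-(y*(1-u⁻¹/y)*(1-Q*x/y))*cauchyP Q x y n) := by
            field_simp
            ring
    have e4 : Q^(m+1)*(1-y*u)*(1-x*v/y)*(cauchyP Q x (y/Q) n *
            RfS Q m (v/y*Q) (Q*x/y*Q) (x*v/y*Q) (y/Q))
        = -(y*Q^m*(1-v/y)*(1-Q*x/y))*(cauchyP Q x y n *
            RfS Q m (v/y*Q) (Q*x/y*Q) (x*v/y*Q) (y/Q)) := by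
      have h6 : ∀ R : ℂ, Q^(m+1)*(1-y*u)*(1-x*v/y)*(cauchyP Q x (y/Q) n * R)
          = Q^m*R*(Q*(1-y*u)*(1-x*v/y)*cauchyP Q x (y/Q) n) := by intro R; ring
      rw [h6, h5]
      ring
    calc (Q/y)*(LfS Q n m x y - (1-y*u)*LfS Q n m x (y/Q))*qPoch Q (x*v/y) (m+1)*y^(m+1)
        = (Q/y)*(LfS Q n m x y)*(qPoch Q (x*v/y) m*(1-(x*v/y)*Q^m))*y^(m+1)
          - (Q/y)*((1-y*u)*LfS Q n m x (y/Q))*((1-(x*v/y))*qPoch Q (x*v/y*Q) m)*y^(m+1) := by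
          linear_combination ((Q/y)*y^(m+1)*LfS Q n m x y) * hP1
            - ((Q/y)*y^(m+1)*(1-y*u)*LfS Q n m x (y/Q)) * hP2
      _ = _ := by
          rw [e2, e3, e4]
          ring


set_option maxHeartbeats 1000000 in
theorem extended_q_chu_vandermonde (q : ℝ) (hq0 : 0 < q) (hq1 : q < 1) (n m : ℕ) (x y : ℂ)
    (hy0 : y ≠ 0) (hy : qPoch (q : ℂ) y n ≠ 0)
    (hx : qPoch (q : ℂ) (x * (q : ℂ) ^ (1 - (n : ℤ)) / y) m ≠ 0) :
    ∑ k ∈ Finset.range (n + 1),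
        qPoch (q : ℂ) ((q : ℂ) ^ (-(n : ℤ))) k * qPoch (q : ℂ) x k /
          (qPoch (q : ℂ) (q : ℂ) k * qPoch (q : ℂ) y k) * (q : ℂ) ^ ((1 + m) * k)
      = cauchyP (q : ℂ) x y n / qPoch (q : ℂ) y n *
          ∑ j ∈ Finset.range (m + 1),
            qBinom (q : ℂ) m j *
              (qPoch (q : ℂ) ((q : ℂ) ^ (1 - (n : ℤ)) / y) (m - j) *
                qPoch (q : ℂ) ((q : ℂ) * x / y) (m - j) /
                  qPoch (q : ℂ) (x * (q : ℂ) ^ (1 - (n : ℤ)) / y) (m - j)) *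
              ((q : ℂ) / y) ^ j := by
  have hQ0 : (q:ℂ) ≠ 0 := Complex.ofReal_ne_zero.mpr (ne_of_gt hq0)
  set Q : ℂ := (q:ℂ) with hQdef
  set v : ℂ := Q^(1-(n:ℤ)) with hv
  have hym : y^m ≠ 0 := pow_ne_zero _ hy0
  have step1 : ∑ k ∈ Finset.range (n + 1),
        qPoch Q (Q ^ (-(n : ℤ))) k * qPoch Q x k /
          (qPoch Q Q k * qPoch Q y k) * Q ^ ((1 + m) * k)
      = LfS Q n m x y / qPoch Q y n := by
    rw [LfS, Finset.sum_div]
    apply Finset.sum_congr rfl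
    intro k hk
    have hk' : k ≤ n := Nat.lt_succ_iff.mp (Finset.mem_range.mp hk)
    obtain ⟨hyk, hyk2⟩ := qPoch_factors Q y hk' hy
    have hqk := qq_ne q hq0 hq1 k
    have hsplit : qPoch Q y n = qPoch Q y k * qPoch Q (y*Q^k) (n-k) := by
      have h := qPoch_add Q y k (n-k)
      rw [Nat.add_sub_cancel' hk'] at h
      exact h
    rw [hsplit]
    field_simp
  have step2 : ∑ j ∈ Finset.range (m + 1),
        qBinom Q m j *
          (qPoch Q (Q ^ (1 - (n : ℤ)) / y) (m - j) * qPoch Q (Q * x / y) (m - j) /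
            qPoch Q (x * Q ^ (1 - (n : ℤ)) / y) (m - j)) * (Q / y) ^ j
      = RfS Q m (v/y) (Q*x/y) (x*v/y) y /
          (qPoch Q (x*v/y) m * y^m) := by
    rw [RfS, Finset.sum_div]
    apply Finset.sum_congr rfl
    intro j hj
    have hj' : j ≤ m := Nat.lt_succ_iff.mp (Finset.mem_range.mp hj)
    have hsplitc : qPoch Q (x*v/y) m
        = qPoch Q (x*v/y) (m-j) * qPoch Q ((x*v/y)*Q^(m-j)) j := by
      have h := qPoch_add Q (x*v/y) (m-j) j
      rw [Nat.sub_add_cancel hj'] at h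
      exact h
    obtain ⟨hc1, hc2⟩ := qPoch_factors Q (x*v/y) (Nat.sub_le m j) hx
    rw [Nat.sub_sub_self hj'] at hc2
    rw [hsplitc]
    have hpy : y^m = y^(m-j)*y^j := by rw [← pow_add, Nat.sub_add_cancel hj']
    rw [hpy, div_pow]
    set P1 : ℂ := qPoch Q (v/y) (m-j)
    set P2 : ℂ := qPoch Q (Q*x/y) (m-j)
    set P3 : ℂ := qPoch Q (x*v/y) (m-j)
    set P4 : ℂ := qPoch Q (x*v/y*Q^(m-j)) j
    have hyj : y^j ≠ 0 := pow_ne_zero _ hy0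
    have hymj : y^(m-j) ≠ 0 := pow_ne_zero _ hy0
    field_simp
  rw [step1, step2]
  have hid := mainID q hq0 hq1 n x m y hy0
  rw [← hQdef] at hid
  rw [← hv] at hid
  rw [div_mul_div_comm]
  rw [div_eq_div_iff hy (mul_ne_zero hy (mul_ne_zero hx hym))]
  linear_combination (qPoch Q y n) * hid
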